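/- Let g : ℝ → ℝ be C^{1,1} (differentiable with Lipschitz derivative) and a < ū < b. Then the left derivative of conv_{[a,ū]} g at ū exceeds the derivative of conv_{[a,b]} g at ū by at most Lip(g')·(b − ū): (conv_{[a,ū]} g)'(ū−) − (conv_{[a,b]} g)'(ū) ≤ Lip(g')·(b − ū). -/

import Mathlib

/-!
Let `ℓ(x) = E(ū) + d₂ (x - ū)` be the tangent line of `E = conv_{[a,b]} g` at `ū`. It lies below
`g` on `[a,b]`, and it touches `g` at some `q ∈ [ū,b]`: otherwise `ℓ` could be tilted upwards to the
right of `ū` and still lie below `g`, hence below `E`, contradicting `E'(ū) = d₂`. The Taylor bound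
`|g y - g x - g'(x)(y - x)| ≤ Lip(g') (y - x)²`, used between `ū` and `q` and between `ū` and a
point left of `ū`, shows that the line through `(ū, g ū)` of slope `d₂ + Lip(g') (b - ū)` lies below
`g` on `[a,ū]`. That line is a convex minorant of `g` on `[a,ū]` through the value of
`conv_{[a,ū]} g` at `ū`, so it bounds the left derivative there.
-/

open Set

/-- The convex envelope of `g` on the interval `[a,b]`: the pointwise supremum of all
convex functions on `[a,b]` lying below `g` on `[a,b]`. -/
noncomputable def convEnv (a b : ℝ) (g : ℝ → ℝ) : ℝ → ℝ :=
  fun u => sSup {y : ℝ | ∃ h : ℝ → ℝ, ConvexOn ℝ (Set.Icc a b) h ∧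
    (∀ x ∈ Set.Icc a b, h x ≤ g x) ∧ y = h u}

open Filter Topology

theorem abs_sub_sub_deriv_mul_le_of_lipschitzWith_deriv {g : ℝ → ℝ} {M : NNReal}
    (hg : Differentiable ℝ g) (hM : LipschitzWith M (deriv g)) (x y : ℝ) :
    |g y - g x - deriv g x * (y - x)| ≤ M * (y - x) ^ 2 := by
  have hderiv (t : ℝ) : HasDerivAt (fun t => g t - deriv g x * t) (deriv g t - deriv g x) t :=
    ((hg t).hasDerivAt.sub ((hasDerivAt_id' t).const_mul (deriv g x))).congr_deriv (by ring)
  have hbound : ∀ t ∈ uIcc x y, ‖deriv g t - deriv g x‖ ≤ M * |y - x| := fun t ht =>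
    calc ‖deriv g t - deriv g x‖ ≤ M * |t - x| := by simpa [Real.dist_eq] using hM.dist_le_mul t x
      _ ≤ M * |y - x| := mul_le_mul_of_nonneg_left (abs_sub_left_of_mem_uIcc ht) M.2
  have := (convex_uIcc x y).norm_image_sub_le_of_norm_hasDerivWithin_le
    (fun t _ => (hderiv t).hasDerivWithinAt) hbound left_mem_uIcc right_mem_uIcc
  rw [Real.norm_eq_abs, Real.norm_eq_abs] at this
  calc |g y - g x - deriv g x * (y - x)| = |g y - deriv g x * y - (g x - deriv g x * x)| := by
        ring_nf
    _ ≤ M * |y - x| * |y - x| := this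
    _ = M * (y - x) ^ 2 := by rw [mul_assoc, abs_mul_abs_self, sq]

theorem le_of_hasDerivWithinAt_Ioi_of_affine_le {f : ℝ → ℝ} {u C d : ℝ}
    (hf : HasDerivWithinAt f d (Ioi u) u) (hC : ∀ᶠ x in 𝓝[>] u, f u + C * (x - u) ≤ f x) :
    C ≤ d := by
  refine ge_of_tendsto ((hasDerivWithinAt_iff_tendsto_slope' self_notMem_Ioi).mp hf) ?_
  filter_upwards [hC, self_mem_nhdsWithin] with x hx (hux : u < x)
  rw [slope_def_field, le_div_iff₀ (sub_pos.2 hux)]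
  linarith

theorem ge_of_hasDerivWithinAt_Iio_of_affine_le {f : ℝ → ℝ} {u C d : ℝ}
    (hf : HasDerivWithinAt f d (Iio u) u) (hC : ∀ᶠ x in 𝓝[<] u, f u + C * (x - u) ≤ f x) :
    d ≤ C := by
  refine le_of_tendsto ((hasDerivWithinAt_iff_tendsto_slope' self_notMem_Iio).mp hf) ?_
  filter_upwards [hC, self_mem_nhdsWithin] with x hx (hxu : x < u)
  rw [slope_def_field, div_le_iff_of_neg (sub_neg.2 hxu)]
  linarith

theorem ConvexOn.affine_le_of_hasDerivAt {f : ℝ → ℝ} {s : Set ℝ} {u x d : ℝ}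
    (hf : ConvexOn ℝ s f) (hu : u ∈ s) (hx : x ∈ s) (hd : HasDerivAt f d u) :
    f u + d * (x - u) ≤ f x := by
  rcases lt_trichotomy x u with hxu | rfl | hux
  · have := hf.slope_le_of_hasDerivAt hx hu hxu hd
    rw [slope_def_field, div_le_iff₀ (sub_pos.2 hxu)] at this
    linarith
  · simp
  · have := hf.le_slope_of_hasDerivAt hu hx hux hd
    rw [slope_def_field, le_div_iff₀ (sub_pos.2 hux)] at this
    linarith

theorem convexOn_affine {s : Set ℝ} (hs : Convex ℝ s) (c C u : ℝ) :
    ConvexOn ℝ s (fun x => c + C * (x - u)) := by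
  refine ⟨hs, fun x _ y _ p q _ _ hpq => le_of_eq ?_⟩
  simp only [smul_eq_mul]
  linear_combination (c - C * u) * hpq.symm

theorem le_add_mul_sub_of_affine_contact {g : ℝ → ℝ} {M : NNReal} (hg : Differentiable ℝ g)
    (hM : LipschitzWith M (deriv g)) {b c d q u x : ℝ} (hxu : x ≤ u) (huq : u ≤ q) (hqb : q ≤ b)
    (hx : c + d * (x - u) ≤ g x) (hq : g q = c + d * (q - u)) :
    g u + (d + M * (b - u)) * (x - u) ≤ g x := by
  have hM0 : (0 : ℝ) ≤ M := M.2
  set t := u - x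
  set β := q - u
  set δ := g u - c
  have ht0 : 0 ≤ t := sub_nonneg.2 hxu
  have hβb : β ≤ b - u := by linarith
  have hMβt : M * β * t ≤ M * (b - u) * t := by gcongr
  -- a small gap `δ` lets the support line itself do the job; a large one is paid for by the
  -- Taylor bound between `u` and the contact point `q`
  rcases le_or_gt δ (M * β * t) with hsmall | hlarge
  · nlinarith
  · have hβ0 : 0 < β := (sub_nonneg.2 huq).lt_of_ne fun hβ => by
      obtain rfl : q = u := by linarith
      nlinarith
    have hTq := (abs_le.1 (abs_sub_sub_deriv_mul_le_of_lipschitzWith_deriv hg hM u q)).1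
    have hTx := (abs_le.1 (abs_sub_sub_deriv_mul_le_of_lipschitzWith_deriv hg hM u x)).1
    have hslope : deriv g u * β ≤ d * β + M * β ^ 2 - δ := by nlinarith
    have : β * (deriv g u * t + M * t ^ 2) ≤ β * ((d + M * (b - u)) * t) := by
      nlinarith [mul_le_mul_of_nonneg_right hslope ht0]
    have := le_of_mul_le_mul_left this hβ0
    nlinarith

section ConvexEnvelope

variable {g : ℝ → ℝ} {a b u : ℝ}

theorem le_convEnv {h : ℝ → ℝ} (hc : ConvexOn ℝ (Icc a b) h) (hle : ∀ x ∈ Icc a b, h x ≤ g x)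
    (hu : u ∈ Icc a b) : h u ≤ convEnv a b g u :=
  le_csSup ⟨g u, by rintro _ ⟨h, -, hle, rfl⟩; exact hle u hu⟩ ⟨h, hc, hle, rfl⟩

theorem convEnv_le_of_convexOn_le {h : ℝ → ℝ} (hc : ConvexOn ℝ (Icc a b) h)
    (hle : ∀ x ∈ Icc a b, h x ≤ g x) (hu : u ∈ Icc a b) : convEnv a b g u ≤ g u :=
  csSup_le ⟨h u, h, hc, hle, rfl⟩ fun _ ⟨_, _, hle, hy⟩ => hy ▸ hle u hu

theorem exists_convexOn_le (hg : ContinuousOn g (Icc a b)) :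
    ∃ h : ℝ → ℝ, ConvexOn ℝ (Icc a b) h ∧ ∀ x ∈ Icc a b, h x ≤ g x := by
  obtain ⟨m, hm⟩ := isCompact_Icc.bddBelow_image hg
  exact ⟨fun _ => m, convexOn_const m (convex_Icc a b), fun x hx => hm (mem_image_of_mem g hx)⟩

theorem convEnv_le (hg : ContinuousOn g (Icc a b)) (hu : u ∈ Icc a b) : convEnv a b g u ≤ g u :=
  let ⟨_, hc, hle⟩ := exists_convexOn_le hg
  convEnv_le_of_convexOn_le hc hle hu

theorem convexOn_convEnv (hg : ContinuousOn g (Icc a b)) :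
    ConvexOn ℝ (Icc a b) (convEnv a b g) := by
  obtain ⟨h₀, h₀c, h₀le⟩ := exists_convexOn_le hg
  refine ⟨convex_Icc a b, fun x hx y hy s t hs ht hst => ?_⟩
  refine csSup_le ⟨h₀ _, h₀, h₀c, h₀le, rfl⟩ ?_
  rintro _ ⟨h, hc, hle, rfl⟩
  calc h (s • x + t • y) ≤ s • h x + t • h y := hc.2 hx hy hs ht hst
    _ ≤ s • convEnv a b g x + t • convEnv a b g y := by
      gcongr
      exacts [le_convEnv hc hle hx, le_convEnv hc hle hy]

theorem affine_le_of_hasDerivAt_convEnv (hg : ContinuousOn g (Icc a b)) {d x : ℝ}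
    (hu : u ∈ Icc a b) (hd : HasDerivAt (convEnv a b g) d u) (hx : x ∈ Icc a b) :
    convEnv a b g u + d * (x - u) ≤ g x :=
  ((convexOn_convEnv hg).affine_le_of_hasDerivAt hu hx hd).trans (convEnv_le hg hx)

theorem le_of_hasDerivWithinAt_convEnv_of_affine_le {C d : ℝ} (hau : a < u)
    (hd : HasDerivWithinAt (convEnv a u g) d (Icc a u) u)
    (hC : ∀ x ∈ Icc a u, g u + C * (x - u) ≤ g x) : d ≤ C := by
  have hψ := convexOn_affine (convex_Icc a u) (g u) C u
  have hu : u ∈ Icc a u := right_mem_Icc.2 hau.le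
  have hEu : convEnv a u g u ≤ g u := convEnv_le_of_convexOn_le hψ hC hu
  refine ge_of_hasDerivWithinAt_Iio_of_affine_le
    (hd.mono_of_mem_nhdsWithin (Icc_mem_nhdsLT hau)) ?_
  filter_upwards [Icc_mem_nhdsLT hau] with x hx
  linarith [le_convEnv hψ hC hx]

theorem exists_eq_affine_of_hasDerivAt_convEnv (hg : ContinuousOn g (Icc a b)) {d : ℝ}
    (hau : a ≤ u) (hub : u < b) (hd : HasDerivAt (convEnv a b g) d u) :
    ∃ q ∈ Icc u b, g q = convEnv a b g u + d * (q - u) := by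
  set L := fun x => convEnv a b g u + d * (x - u) with hL
  by_contra! hne
  have hLg : ∀ x ∈ Icc a b, L x ≤ g x := fun x =>
    affine_le_of_hasDerivAt_convEnv hg ⟨hau, hub.le⟩ hd
  obtain ⟨x₀, hx₀, hmin⟩ := isCompact_Icc.exists_isMinOn (nonempty_Icc.2 hub.le)
    ((hg.mono (Icc_subset_Icc_left hau)).sub (by fun_prop) : ContinuousOn (g - L) (Icc u b))
  have hε : 0 < g x₀ - L x₀ :=
    sub_pos.2 ((hLg x₀ ⟨hau.trans hx₀.1, hx₀.2⟩).lt_of_ne (hne x₀ hx₀).symm)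
  set s := (g x₀ - L x₀) / (b - u) with hs
  have hs0 : 0 < s := div_pos hε (sub_pos.2 hub)
  have htilt : ∀ x ∈ Icc a b, convEnv a b g u + (d + s) * (x - u) ≤ g x := by
    intro x hx
    have := hLg x hx
    rcases le_or_gt x u with hxu | hux
    · nlinarith
    · have hmin' : g x₀ - L x₀ ≤ g x - L x := hmin ⟨hux.le, hx.2⟩
      have : s * (x - u) ≤ g x₀ - L x₀ := by
        rw [hs, div_mul_eq_mul_div, div_le_iff₀ (sub_pos.2 hub)]
        nlinarith [hx.2]
      simp only [hL] at hmin' ⊢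
      linarith
  have : d + s ≤ d := by
    refine le_of_hasDerivWithinAt_Ioi_of_affine_le hd.hasDerivWithinAt ?_
    filter_upwards [Ioo_mem_nhdsGT hub] with x hx
    exact le_convEnv (convexOn_affine (convex_Icc a b) _ _ _) htilt
      ⟨hau.trans hx.1.le, hx.2.le⟩
  linarith

end ConvexEnvelope

theorem stmt6 (g : ℝ → ℝ) (M : NNReal) (hg : Differentiable ℝ g)
    (hM : LipschitzWith M (deriv g)) (a ubar b : ℝ)
    (h1 : a < ubar) (h2 : ubar < b) (d₁ d₂ : ℝ)
    (hd₁ : HasDerivWithinAt (convEnv a ubar g) d₁ (Set.Icc a ubar) ubar)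
    (hd₂ : HasDerivWithinAt (convEnv a b g) d₂ (Set.Icc a b) ubar) :
    d₁ - d₂ ≤ (M : ℝ) * (b - ubar) := by
  have hgc : ContinuousOn g (Icc a b) := hg.continuous.continuousOn
  have hd₂' : HasDerivAt (convEnv a b g) d₂ ubar := hd₂.hasDerivAt (Icc_mem_nhds h1 h2)
  obtain ⟨q, ⟨huq, hqb⟩, hq⟩ := exists_eq_affine_of_hasDerivAt_convEnv hgc h1.le h2 hd₂'
  have : d₁ ≤ d₂ + M * (b - ubar) := by
    refine le_of_hasDerivWithinAt_convEnv_of_affine_le h1 hd₁ fun x hx => ?_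
    exact le_add_mul_sub_of_affine_contact hg hM hx.2 huq hqb
      (affine_le_of_hasDerivAt_convEnv hgc ⟨h1.le, h2.le⟩ hd₂' ⟨hx.1, hx.2.trans h2.le⟩) hq
  linarith
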